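/- For the PI closed-loop system ẋ = −BRBᵀ∇H(x) − B∇H_c(x_c) + Ed̄, ẋ_c = Bᵀ∇H(x), suppose x̄_c satisfies the matching condition Ed̄ = B∇H_c(x̄_c). Then the function V(x,x_c) = H(x) + H_c(x_c) − ∇H_c(x̄_c)ᵀ(x_c − x̄_c) − H_c(x̄_c) satisfies d/dt V = −∇H(x)ᵀBRBᵀ∇H(x) ≤ 0 along solutions. -/

import Mathlib

open Matrix

/-- The continuous linear map `v ↦ g ⬝ᵥ v`, used to express gradients of functions
on `ι → ℝ`. -/
noncomputable def dotCLM {ι : Type} [Fintype ι] (g : ι → ℝ) : (ι → ℝ) →L[ℝ] ℝ :=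
  LinearMap.toContinuousLinearMap
    (∑ i : ι, g i • (LinearMap.proj i : (ι → ℝ) →ₗ[ℝ] ℝ))

@[simp]
lemma dotCLM_apply {ι : Type} [Fintype ι] (g v : ι → ℝ) : dotCLM g v = g ⬝ᵥ v := by
  simp [dotCLM, dotProduct]

lemma HasFDerivAt.comp_hasDerivAt_dotCLM {ι : Type} [Fintype ι] {f : (ι → ℝ) → ℝ}
    {γ : ℝ → ι → ℝ} {g γ' : ι → ℝ} {t : ℝ}
    (hf : HasFDerivAt f (dotCLM g) (γ t)) (hγ : HasDerivAt γ γ' t) :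
    HasDerivAt (fun s => f (γ s)) (g ⬝ᵥ γ') t := by
  simpa only [Function.comp_def, dotCLM_apply] using hf.comp_hasDerivAt t hγ

lemma dotProduct_mul_diagonal_mul_transpose_mulVec_nonneg {m n : Type} [Fintype m]
    [Fintype n] [DecidableEq n] (B : Matrix m n ℝ) {r : n → ℝ} (hr : 0 ≤ r) (g : m → ℝ) :
    0 ≤ g ⬝ᵥ (B * diagonal r * Bᵀ) *ᵥ g := by
  have hPSD := (PosSemidef.diagonal hr).mul_mul_conjTranspose_same B
  simpa [conjTranspose_eq_transpose_of_trivial] using hPSD.dotProduct_mulVec_nonneg g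

/-- The interconnection through `B` and `Bᵀ` is lossless, and subtracting the tangent of `H_c`
at `x̄_c` cancels the constant input `B∇H_c(x̄_c)`. -/
theorem hasDerivAt_shifted_hamiltonian {V E : Type} [Fintype V] [Fintype E]
    (M : Matrix V V ℝ) (B : Matrix V E ℝ)
    {H : (V → ℝ) → ℝ} {Hc : (E → ℝ) → ℝ} {gH : V → ℝ} {gHc gHcbar : E → ℝ}
    {x : ℝ → V → ℝ} {xc : ℝ → E → ℝ} {xcbar : E → ℝ} {t : ℝ}
    (hH : HasFDerivAt H (dotCLM gH) (x t)) (hHc : HasFDerivAt Hc (dotCLM gHc) (xc t))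
    (hx : HasDerivAt x (-(M *ᵥ gH) - B *ᵥ gHc + B *ᵥ gHcbar) t)
    (hxc : HasDerivAt xc (Bᵀ *ᵥ gH) t) :
    HasDerivAt (fun s => H (x s) + Hc (xc s) - gHcbar ⬝ᵥ (xc s - xcbar) - Hc xcbar)
      (-(gH ⬝ᵥ M *ᵥ gH)) t := by
  have hshift : HasDerivAt (fun s => gHcbar ⬝ᵥ (xc s - xcbar)) (gHcbar ⬝ᵥ Bᵀ *ᵥ gH) t := by
    simpa only [dotCLM_apply] using
      (dotCLM gHcbar).hasFDerivAt.comp_hasDerivAt_dotCLM (hxc.sub_const xcbar)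
  have hV := (((hH.comp_hasDerivAt_dotCLM hx).add (hHc.comp_hasDerivAt_dotCLM hxc)).sub
    hshift).sub_const (Hc xcbar)
  have hadjoint (w : E → ℝ) : w ⬝ᵥ Bᵀ *ᵥ gH = gH ⬝ᵥ B *ᵥ w := by
    rw [mulVec_transpose, dotProduct_mulVec, dotProduct_comm]
  refine hV.congr_deriv ?_
  simp only [hadjoint, dotProduct_add, dotProduct_sub, dotProduct_neg]
  ring

theorem stmt_11_general {V E K : Type} [Fintype V] [Fintype E] [Fintype K]
    [DecidableEq E]
    (B : Matrix V E ℝ)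
    (r : E → ℝ) (hr : ∀ i, 0 < r i)
    (F : Matrix V K ℝ)
    (d : K → ℝ)
    (H : (V → ℝ) → ℝ) (gradH : (V → ℝ) → (V → ℝ))
    (hH : ∀ p, HasFDerivAt H (dotCLM (gradH p)) p)
    (Hc : (E → ℝ) → ℝ) (gradHc : (E → ℝ) → (E → ℝ))
    (hHc : ∀ p, HasFDerivAt Hc (dotCLM (gradHc p)) p)
    (xcbar : E → ℝ)
    (hmatch : F.mulVec d = B.mulVec (gradHc xcbar))
    (x : ℝ → V → ℝ) (xc : ℝ → E → ℝ)
    (hx : ∀ t, HasDerivAt x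
      (-(B * Matrix.diagonal r * Bᵀ).mulVec (gradH (x t))
        - B.mulVec (gradHc (xc t)) + F.mulVec d) t)
    (hxc : ∀ t, HasDerivAt xc (Bᵀ.mulVec (gradH (x t))) t) :
    ∀ t : ℝ,
      HasDerivAt
        (fun s => H (x s) + Hc (xc s) - gradHc xcbar ⬝ᵥ (xc s - xcbar) - Hc xcbar)
        (-(gradH (x t) ⬝ᵥ (B * Matrix.diagonal r * Bᵀ).mulVec (gradH (x t)))) t ∧
      -(gradH (x t) ⬝ᵥ (B * Matrix.diagonal r * Bᵀ).mulVec (gradH (x t))) ≤ 0 := by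
  intro t
  refine ⟨hasDerivAt_shifted_hamiltonian _ B (hH _) (hHc _) (hmatch ▸ hx t) (hxc t), ?_⟩
  exact neg_nonpos.mpr
    (dotProduct_mul_diagonal_mul_transpose_mulVec_nonneg B (fun i => (hr i).le) _)

/-- for the PI closed loop `ẋ = −BRBᵀ∇H(x) − B∇H_c(x_c) + E d̄`,
`ẋ_c = Bᵀ∇H(x)`, if `x̄_c` satisfies the matching condition `E d̄ = B ∇H_c(x̄_c)`, then
`V(x,x_c) = H(x) + H_c(x_c) − ∇H_c(x̄_c)ᵀ(x_c − x̄_c) − H_c(x̄_c)` satisfies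
`d/dt V = −∇H(x)ᵀ B R Bᵀ ∇H(x) ≤ 0` along solutions. -/
theorem stmt_11 {V E K : Type} [Fintype V] [Fintype E] [Fintype K]
    [DecidableEq V] [DecidableEq E]
    (head tail : E → V)
    (B : Matrix V E ℝ)
    (hB : ∀ v e, B v e = (if head e = v then (1 : ℝ) else 0) - (if tail e = v then 1 else 0))
    (r : E → ℝ) (hr : ∀ i, 0 < r i)
    (F : Matrix V K ℝ)
    (hF : ∀ j : K, ∃ i : V, (F i j = 1 ∨ F i j = -1) ∧ ∀ i' : V, i' ≠ i → F i' j = 0)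
    (d : K → ℝ)
    (H : (V → ℝ) → ℝ) (gradH : (V → ℝ) → (V → ℝ))
    (hH : ∀ p, HasFDerivAt H (dotCLM (gradH p)) p)
    (Hc : (E → ℝ) → ℝ) (gradHc : (E → ℝ) → (E → ℝ))
    (hHc : ∀ p, HasFDerivAt Hc (dotCLM (gradHc p)) p)
    (xcbar : E → ℝ)
    (hmatch : F.mulVec d = B.mulVec (gradHc xcbar))
    (x : ℝ → V → ℝ) (xc : ℝ → E → ℝ)
    (hx : ∀ t, HasDerivAt x
      (-(B * Matrix.diagonal r * Bᵀ).mulVec (gradH (x t))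
        - B.mulVec (gradHc (xc t)) + F.mulVec d) t)
    (hxc : ∀ t, HasDerivAt xc (Bᵀ.mulVec (gradH (x t))) t) :
    ∀ t : ℝ,
      HasDerivAt
        (fun s => H (x s) + Hc (xc s) - gradHc xcbar ⬝ᵥ (xc s - xcbar) - Hc xcbar)
        (-(gradH (x t) ⬝ᵥ (B * Matrix.diagonal r * Bᵀ).mulVec (gradH (x t)))) t ∧
      -(gradH (x t) ⬝ᵥ (B * Matrix.diagonal r * Bᵀ).mulVec (gradH (x t))) ≤ 0 :=
  stmt_11_general B r hr F d H gradH hH Hc gradHc hHc xcbar hmatch x xc hx hxc
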